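/- arXiv:2311.18586 — 2 statements merged into one kernel-verified Lean document; each statement's English description precedes it below -/
import Mathlib

section
/- Let X be a Banach space, let φ : X → ℝ ∪ {+∞} be a proper lower semicontinuous function, let x̄ ∈ dom φ, and let λ > 0. If the proximal set P_λφ(x̄) is nonempty and x̄ is a local minimizer of the Moreau envelope e_λφ, then x̄ is a local minimizer of φ. -/
open Filter Topology

variable {X : Type*}

/-- Moreau envelope `e_λφ(x) = inf_w { φ(w) + (1/(2λ))‖w − x‖² }`, valued in `EReal`. -/
noncomputable def moreauEnv [NormedAddCommGroup X] (lam : ℝ) (φ : X → EReal) (x : X) : EReal :=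
  ⨅ w : X, φ w + (((1 / (2 * lam)) * ‖w - x‖ ^ 2 : ℝ) : EReal)

/-- Proximal mapping `P_λφ(x) = argmin_w { φ(w) + (1/(2λ))‖w − x‖² }`. -/
def proxSet [NormedAddCommGroup X] (lam : ℝ) (φ : X → EReal) (x : X) : Set X :=
  {w : X | ∀ v : X,
    φ w + (((1 / (2 * lam)) * ‖w - x‖ ^ 2 : ℝ) : EReal)
      ≤ φ v + (((1 / (2 * lam)) * ‖v - x‖ ^ 2 : ℝ) : EReal)}

/-- A function `X → ℝ ∪ {+∞}` modeled as `X → EReal`: proper means not identically `+∞`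
and never `−∞`. -/
def IsProper [NormedAddCommGroup X] (φ : X → EReal) : Prop :=
  (∃ x : X, φ x ≠ ⊤) ∧ ∀ x : X, φ x ≠ ⊥

/-- Prox-boundedness: `φ(y) ≥ α‖y − x̄‖² + β` for some `α, β ∈ ℝ`, `x̄ ∈ X`. -/
def ProxBounded [NormedAddCommGroup X] (φ : X → EReal) : Prop :=
  ∃ (a b : ℝ) (x0 : X), ∀ y : X, ((a * ‖y - x0‖ ^ 2 + b : ℝ) : EReal) ≤ φ y

/-- Weak convergence of a sequence: `⟨f, u k⟩ → ⟨f, x⟩` for every continuous linear functional. -/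
def WeakConv [NormedAddCommGroup X] [NormedSpace ℝ X] (u : ℕ → X) (x : X) : Prop :=
  ∀ f : X →L[ℝ] ℝ, Tendsto (fun k => f (u k)) atTop (𝓝 (f x))

/-- Weak sequential lower semicontinuity. -/
def WeakSeqLSC [NormedAddCommGroup X] [NormedSpace ℝ X] (φ : X → EReal) : Prop :=
  ∀ (x : X) (u : ℕ → X), WeakConv u x → φ x ≤ liminf (fun k => φ (u k)) atTop

/-- Sequential form of reflexivity: every bounded sequence has a weakly convergent
subsequence. -/
def SeqReflexive (X : Type*) [NormedAddCommGroup X] [NormedSpace ℝ X] : Prop :=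
  ∀ u : ℕ → X, (∃ C : ℝ, ∀ k, ‖u k‖ ≤ C) →
    ∃ (s : ℕ → ℕ) (z : X), StrictMono s ∧ WeakConv (u ∘ s) z

/-- Local minimizer. -/
def LocalMin [NormedAddCommGroup X] (g : X → EReal) (x0 : X) : Prop :=
  ∃ ε > (0 : ℝ), ∀ x : X, ‖x - x0‖ < ε → g x0 ≤ g x

/-- Strong local minimizer with modulus `σ`. -/
def StrongLocalMin [NormedAddCommGroup X] (g : X → EReal) (x0 : X) (σ : ℝ) : Prop :=
  ∃ ε > (0 : ℝ), ∀ x : X, ‖x - x0‖ < ε →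
    g x0 + (((σ / 2) * ‖x - x0‖ ^ 2 : ℝ) : EReal) ≤ g x

/-- The zero functional `0 ∈ X*` is a proximal subgradient of `φ` at `x0`. -/
def ZeroProxSubgradient [NormedAddCommGroup X] [NormedSpace ℝ X] (φ : X → EReal) (x0 : X) :
    Prop :=
  ∃ r > (0 : ℝ), ∃ ε > (0 : ℝ), ∀ x : X, ‖x - x0‖ < ε →
    φ x0 + ((((0 : X →L[ℝ] ℝ) (x - x0)) - (r / 2) * ‖x - x0‖ ^ 2 : ℝ) : EReal) ≤ φ x

/-
If `w ∈ P_λφ(x̄)` with `w ≠ x̄`, moving `x` from `x̄` a little towards `w` strictly lowers the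
envelope, because `e_λφ(x) ≤ φ(w) + ‖w − x‖²/(2λ) < φ(w) + ‖w − x̄‖²/(2λ) = e_λφ(x̄)`; this contradicts
local minimality. Hence `x̄ ∈ P_λφ(x̄)`, so `e_λφ(x̄) = φ(x̄)`, and `φ(x̄) = e_λφ(x̄) ≤ e_λφ(x) ≤ φ(x)`
near `x̄`.
-/

section

variable [NormedAddCommGroup X]

theorem LocalMin.eventually_le {g : X → EReal} {x0 : X} (h : LocalMin g x0) :
    ∀ᶠ x in 𝓝 x0, g x0 ≤ g x := by
  obtain ⟨ε, hε, hg⟩ := h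
  exact Metric.eventually_nhds_iff.2 ⟨ε, hε, fun {x} hx => hg x (dist_eq_norm x x0 ▸ hx)⟩

theorem moreauEnv_le (lam : ℝ) (φ : X → EReal) (x w : X) :
    moreauEnv lam φ x ≤ φ w + (((1 / (2 * lam)) * ‖w - x‖ ^ 2 : ℝ) : EReal) :=
  iInf_le (fun w => φ w + (((1 / (2 * lam)) * ‖w - x‖ ^ 2 : ℝ) : EReal)) w

theorem moreauEnv_le_self (lam : ℝ) (φ : X → EReal) (x : X) : moreauEnv lam φ x ≤ φ x := by
  simpa using moreauEnv_le lam φ x x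

theorem moreauEnv_eq_of_mem_proxSet {lam : ℝ} {φ : X → EReal} {x w : X}
    (hw : w ∈ proxSet lam φ x) :
    moreauEnv lam φ x = φ w + (((1 / (2 * lam)) * ‖w - x‖ ^ 2 : ℝ) : EReal) :=
  le_antisymm (moreauEnv_le lam φ x w) (le_iInf hw)

theorem moreauEnv_self_eq_of_mem_proxSet {lam : ℝ} {φ : X → EReal} {x : X}
    (hx : x ∈ proxSet lam φ x) : moreauEnv lam φ x = φ x := by
  simpa using moreauEnv_eq_of_mem_proxSet hx

theorem ne_top_of_mem_proxSet {lam : ℝ} {φ : X → EReal} {x w : X}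
    (hw : w ∈ proxSet lam φ x) (hx : φ x ≠ ⊤) : φ w ≠ ⊤ := by
  have h : φ w + (((1 / (2 * lam)) * ‖w - x‖ ^ 2 : ℝ) : EReal) ≤ φ x := by simpa using hw x
  intro hw_top
  rw [hw_top, EReal.top_add_coe, top_le_iff] at h
  exact hx h

end

theorem eq_of_mem_proxSet_of_localMin [NormedAddCommGroup X] [NormedSpace ℝ X]
    {lam : ℝ} (hlam : 0 < lam) {φ : X → EReal} {x w : X}
    (hw : w ∈ proxSet lam φ x) (hw_top : φ w ≠ ⊤) (hw_bot : φ w ≠ ⊥)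
    (hmin : LocalMin (moreauEnv lam φ) x) : w = x := by
  set c := 1 / (2 * lam)
  set d := ‖w - x‖
  have hseg : Tendsto (fun t : ℝ => x + t • (w - x)) (𝓝[>] 0) (𝓝 x) :=
    ((continuous_const.add (continuous_id.smul continuous_const)).tendsto' 0 x
      (by simp)).mono_left nhdsWithin_le_nhds
  obtain ⟨t, ht_min, ht0, ht1⟩ :=
    ((hseg.eventually hmin.eventually_le).and (Ioo_mem_nhdsGT one_pos)).exists
  have hdist : ‖w - (x + t • (w - x))‖ = (1 - t) * d := by
    rw [show w - (x + t • (w - x)) = (1 - t) • (w - x) by module, norm_smul,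
      Real.norm_of_nonneg (by linarith)]
  have hdecrease :
      φ w + ((c * d ^ 2 : ℝ) : EReal) ≤ φ w + ((c * ((1 - t) * d) ^ 2 : ℝ) : EReal) :=
    calc φ w + ((c * d ^ 2 : ℝ) : EReal) = moreauEnv lam φ x :=
          (moreauEnv_eq_of_mem_proxSet hw).symm
      _ ≤ moreauEnv lam φ (x + t • (w - x)) := ht_min
      _ ≤ φ w + ((c * ((1 - t) * d) ^ 2 : ℝ) : EReal) := hdist ▸ moreauEnv_le lam φ _ w
  lift φ w to ℝ using ⟨hw_top, hw_bot⟩ with r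
  have hreal : c * d ^ 2 ≤ c * ((1 - t) * d) ^ 2 :=
    (add_le_add_iff_left r).1 (by exact_mod_cast hdecrease)
  have hc : 0 < c := by positivity
  have hd : d ^ 2 * (t * (2 - t)) ≤ 0 := by nlinarith
  have hd2 : d ^ 2 ≤ 0 := nonpos_of_mul_nonpos_left hd (mul_pos ht0 (by linarith))
  have hd0 : d = 0 := by nlinarith [norm_nonneg (w - x)]
  exact norm_sub_eq_zero_iff.1 hd0

theorem statement11_general [NormedAddCommGroup X] [NormedSpace ℝ X]
    (φ : X → EReal) (hproper : IsProper φ)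
    (xb : X) (hdom : φ xb ≠ ⊤) (lam : ℝ) (hlam : 0 < lam)
    (hne : (proxSet lam φ xb).Nonempty)
    (hmin : LocalMin (moreauEnv lam φ) xb) :
    LocalMin φ xb := by
  obtain ⟨w, hw⟩ := hne
  have hw_eq : w = xb := eq_of_mem_proxSet_of_localMin hlam hw
    (ne_top_of_mem_proxSet hw hdom) (hproper.2 w) hmin
  have hxb : xb ∈ proxSet lam φ xb := hw_eq ▸ hw
  obtain ⟨ε, hε, hloc⟩ := hmin
  refine ⟨ε, hε, fun x hx => ?_⟩
  calc φ xb = moreauEnv lam φ xb := (moreauEnv_self_eq_of_mem_proxSet hxb).symm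
    _ ≤ moreauEnv lam φ x := hloc x hx
    _ ≤ φ x := moreauEnv_le_self lam φ x

/-- if `P_λφ(x̄)` is nonempty and `x̄` is a local minimizer of `e_λφ`,
then `x̄` is a local minimizer of `φ`. -/
theorem statement11 [NormedAddCommGroup X] [NormedSpace ℝ X] [CompleteSpace X]
    (φ : X → EReal) (hproper : IsProper φ) (hlsc : LowerSemicontinuous φ)
    (xb : X) (hdom : φ xb ≠ ⊤) (lam : ℝ) (hlam : 0 < lam)
    (hne : (proxSet lam φ xb).Nonempty)
    (hmin : LocalMin (moreauEnv lam φ) xb) :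
    LocalMin φ xb :=
  statement11_general φ hproper xb hdom lam hlam hne hmin
end

section
/- Let X be a Hilbert space, let φ : X → ℝ ∪ {+∞} be a proper, prox-bounded, lower semicontinuous function, let x̄ ∈ X, let σ ≠ 0, and define the quadratically σ-shifted function ψ(x) := φ(x) − (σ/2)‖x − x̄‖². Then for all λ ∈ (0, 1/|σ|) and all x ∈ X one has the equality (of values in ℝ ∪ {−∞}): e_λψ(x) = e_{λ/(1−σλ)}φ( (x − σλ x̄)/(1 − σλ) ) − (σ/(2(1−σλ)))‖x − x̄‖². -/
open Filter Topology

variable {X : Type*}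

/-!
Completing the square: with `t = 1 − σλ ≠ 0`, the quadratic
`−(σ/2)‖w − x̄‖² + (1/(2λ))‖w − x‖²` in `w` equals `(t/(2λ))‖w − (x − σλx̄)/t‖²` plus a term
independent of `w`. Adding a real constant commutes with infima in `EReal`, so the infimum over
`w` defining `e_λψ(x)` is the infimum defining `e_{λ/t}φ((x − σλx̄)/t)` shifted by that constant.
-/

theorem EReal.iInf_add_coe {ι : Type*} (f : ι → EReal) (c : ℝ) :
    ⨅ i, f i + (c : EReal) = (⨅ i, f i) + c := by
  cases isEmpty_or_nonempty ι with
  | inl _ => simp [iInf_of_empty]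
  | inr _ =>
    refine le_antisymm ?_ (le_iInf fun i => add_le_add_left (iInf_le _ i) _)
    rw [← EReal.sub_le_iff_le_add (by simp) (by simp)]
    refine le_iInf fun i => ?_
    rw [EReal.sub_le_iff_le_add (by simp) (by simp)]
    exact iInf_le _ i

theorem moreauEnv_eq_add_of_forall [NormedAddCommGroup X] {ψ φ : X → EReal} {lam mu : ℝ}
    {x y : X} (c : ℝ)
    (h : ∀ w, ψ w + (((1 / (2 * lam)) * ‖w - x‖ ^ 2 : ℝ) : EReal)
      = φ w + (((1 / (2 * mu)) * ‖w - y‖ ^ 2 : ℝ) : EReal) + c) :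
    moreauEnv lam ψ x = moreauEnv mu φ y + c := by
  simp only [moreauEnv, h, EReal.iInf_add_coe]

theorem neg_half_mul_norm_sq_add_prox_term_eq [NormedAddCommGroup X] [InnerProductSpace ℝ X]
    {σ lam : ℝ} (hlam : lam ≠ 0) (ht : 1 - σ * lam ≠ 0) (w x xb : X) :
    -(σ / 2) * ‖w - xb‖ ^ 2 + 1 / (2 * lam) * ‖w - x‖ ^ 2
      = 1 / (2 * (lam / (1 - σ * lam))) * ‖w - (1 - σ * lam)⁻¹ • (x - (σ * lam) • xb)‖ ^ 2
        + -(σ / (2 * (1 - σ * lam))) * ‖x - xb‖ ^ 2 := by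
  set t := 1 - σ * lam
  have hw : w - t⁻¹ • (x - (σ * lam) • xb) = t⁻¹ • (t • (w - xb) - (x - xb)) := by
    match_scalars <;> field_simp; ring
  rw [show w - x = (w - xb) - (x - xb) by abel, hw, norm_smul, mul_pow,
    norm_sub_sq_real (t • (w - xb)), norm_smul t, real_inner_smul_left,
    norm_sub_sq_real (w - xb) (x - xb)]
  simp only [Real.norm_eq_abs, mul_pow, sq_abs]
  field_simp
  ring

theorem mul_lt_one_of_lt_one_div_abs {σ lam : ℝ} (h0 : 0 < lam) (h1 : lam < 1 / |σ|) :
    σ * lam < 1 := by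
  rcases (abs_nonneg σ).eq_or_lt with hσ | hσ
  · rw [← hσ, div_zero] at h1
    exact absurd h0 h1.not_gt
  · calc σ * lam ≤ |σ| * lam := by gcongr; exact le_abs_self σ
      _ < 1 := (lt_div_iff₀' hσ).mp h1

theorem statement13_general [NormedAddCommGroup X] [InnerProductSpace ℝ X]
    (φ : X → EReal)
    (xb : X) (σ : ℝ)
    (ψ : X → EReal) (hψ : ∀ x, ψ x = φ x + ((-(σ / 2) * ‖x - xb‖ ^ 2 : ℝ) : EReal))
    (lam : ℝ) (h0 : 0 < lam) (h1 : lam < 1 / |σ|) (x : X) :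
    moreauEnv lam ψ x =
      moreauEnv (lam / (1 - σ * lam)) φ ((1 - σ * lam)⁻¹ • (x - (σ * lam) • xb))
        + ((-(σ / (2 * (1 - σ * lam))) * ‖x - xb‖ ^ 2 : ℝ) : EReal) := by
  have ht : 1 - σ * lam ≠ 0 := by linarith [mul_lt_one_of_lt_one_div_abs h0 h1]
  refine moreauEnv_eq_add_of_forall _ fun w => ?_
  rw [hψ w, add_assoc, add_assoc, ← EReal.coe_add, ← EReal.coe_add,
    neg_half_mul_norm_sq_add_prox_term_eq h0.ne' ht w x xb]

/-- Moreau envelope of the quadratically `σ`-shifted function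
`ψ(x) = φ(x) − (σ/2)‖x − x̄‖²` expressed via the envelope of `φ`, for `λ ∈ (0, 1/|σ|)`. -/
theorem statement13 [NormedAddCommGroup X] [InnerProductSpace ℝ X] [CompleteSpace X]
    (φ : X → EReal) (hproper : IsProper φ) (hpb : ProxBounded φ)
    (hlsc : LowerSemicontinuous φ)
    (xb : X) (σ : ℝ) (hσ : σ ≠ 0)
    (ψ : X → EReal) (hψ : ∀ x, ψ x = φ x + ((-(σ / 2) * ‖x - xb‖ ^ 2 : ℝ) : EReal))
    (lam : ℝ) (h0 : 0 < lam) (h1 : lam < 1 / |σ|) (x : X) :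
    moreauEnv lam ψ x =
      moreauEnv (lam / (1 - σ * lam)) φ ((1 - σ * lam)⁻¹ • (x - (σ * lam) • xb))
        + ((-(σ / (2 * (1 - σ * lam))) * ‖x - xb‖ ^ 2 : ℝ) : EReal) :=
  statement13_general φ xb σ ψ hψ lam h0 h1 x
end
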